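/- arXiv:2202.06455 — 3 statements merged into one kernel-verified Lean document; each statement's English description precedes it below -/
import Mathlib

section
/- For every positive integer n, the function S(c) = 1 - (n+1)·∫_0^{1/c} (1-cu)^n/(1+u)^{n+2} du satisfies lim_{c→0+} S(c)/c = 1. -/
/-! Since `d/du ((1 - c u)/(1 + u)) = -(1 + c)/(1 + u)^2`, the integrand is the derivative of
`-((1 - c u)/(1 + u))^(n+1) / ((n+1)(1+c))`, which vanishes at `u = 1/c` and equals
`-1/((n+1)(1+c))` at `u = 0`. Hence `S(c) = 1 - 1/(1+c) = c/(1+c)` exactly. -/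

open MeasureTheory Filter Topology

theorem hasDerivAt_one_sub_mul_div_one_add (c : ℝ) {u : ℝ} (hu : 1 + u ≠ 0) :
    HasDerivAt (fun u : ℝ => (1 - c * u) / (1 + u)) (-(1 + c) / (1 + u) ^ 2) u := by
  have hnum : HasDerivAt (fun u : ℝ => 1 - c * u) (-c) u := by
    simpa using ((hasDerivAt_id u).const_mul c).const_sub 1
  have hden : HasDerivAt (fun u : ℝ => 1 + u) 1 u := by
    simpa using (hasDerivAt_id u).const_add 1
  exact (hnum.div hden hu).congr_deriv (by ring)

theorem hasDerivAt_primitive_one_sub_mul_pow_div_one_add_pow (n : ℕ) {c u : ℝ}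
    (hc : 1 + c ≠ 0) (hu : 1 + u ≠ 0) :
    HasDerivAt (fun u : ℝ => -((1 - c * u) / (1 + u)) ^ (n + 1) / ((n + 1) * (1 + c)))
      ((1 - c * u) ^ n / (1 + u) ^ (n + 2)) u := by
  refine (((hasDerivAt_one_sub_mul_div_one_add c hu).pow (n + 1)).neg.div_const _).congr_deriv ?_
  rw [Nat.add_sub_cancel, div_pow]
  field_simp
  push_cast
  ring

theorem integral_one_sub_mul_pow_div_one_add_pow (n : ℕ) {c : ℝ} (hc : 0 < c) :
    ∫ u in (0 : ℝ)..(1 / c), (1 - c * u) ^ n / (1 + u) ^ (n + 2) = 1 / ((n + 1) * (1 + c)) := by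
  have hpos : ∀ u ∈ Set.uIcc (0 : ℝ) (1 / c), 0 < 1 + u := by
    intro u hu
    rw [Set.uIcc_of_le (by positivity)] at hu
    linarith [hu.1]
  have hcont : ContinuousOn (fun u : ℝ => (1 - c * u) ^ n / (1 + u) ^ (n + 2))
      (Set.uIcc 0 (1 / c)) :=
    (by fun_prop : Continuous fun u : ℝ => (1 - c * u) ^ n).continuousOn.div (by fun_prop)
      fun u hu => (pow_pos (hpos u hu) _).ne'
  rw [intervalIntegral.integral_eq_sub_of_hasDerivAt
    (fun u hu => hasDerivAt_primitive_one_sub_mul_pow_div_one_add_pow n (by positivity)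
      (hpos u hu).ne')
    hcont.intervalIntegrable, mul_one_div_cancel hc.ne']
  simp [field]

theorem stmt2_general (n : ℕ) :
    Tendsto (fun c : ℝ =>
        (1 - ((n:ℝ)+1) * ∫ u in (0:ℝ)..(1/c), (1-c*u)^n/(1+u)^(n+2)) / c)
      (nhdsWithin 0 (Set.Ioi 0)) (nhds 1) := by
  have hS : ∀ᶠ c in 𝓝[>] (0 : ℝ), 1 / (1 + c) =
      (1 - ((n:ℝ)+1) * ∫ u in (0:ℝ)..(1/c), (1-c*u)^n/(1+u)^(n+2)) / c := by
    filter_upwards [self_mem_nhdsWithin] with c (hc : 0 < c)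
    rw [integral_one_sub_mul_pow_div_one_add_pow n hc]
    field_simp
    ring
  have hlim : Tendsto (fun c : ℝ => 1 / (1 + c)) (𝓝[>] 0) (𝓝 1) := by
    have : ContinuousAt (fun c : ℝ => 1 / (1 + c)) 0 :=
      continuousAt_const.div (by fun_prop) (by norm_num)
    simpa using this.tendsto.mono_left nhdsWithin_le_nhds
  exact hlim.congr' hS

theorem stmt2 (n : ℕ) (hn : 0 < n) :
    Tendsto (fun c : ℝ =>
        (1 - ((n:ℝ)+1) * ∫ u in (0:ℝ)..(1/c), (1-c*u)^n/(1+u)^(n+2)) / c)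
      (nhdsWithin 0 (Set.Ioi 0)) (nhds 1) :=
  stmt2_general n
end

section
/- For every positive integer n there exists a constant M > 0, depending only on n, such that for all real c > 0 one has 1 - (n+1)·∫_0^{1/c} (1-cu)^n/(1+u)^{n+2} du ≤ M·c. -/
/-!
On `[0, 1/c]` Bernoulli's inequality gives `(1 - c u)^n ≥ 1 - n c (1 + u)`, so the integrand is
bounded below by `(1+u)^{-(n+2)} - n c (1+u)^{-(n+1)}`, whose integral is explicit. This yields
`1 - (n+1) ∫ ≤ (1 + 1/c)^{-(n+1)} + (n+1) c`, and `(1 + 1/c)^{-(n+1)} = (c/(1+c))^{n+1} ≤ c`,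
so `M = n + 2` works.
-/

open MeasureTheory intervalIntegral

theorem hasDerivAt_neg_inv_one_add_pow (k : ℕ) {u : ℝ} (hu : 1 + u ≠ 0) :
    HasDerivAt (fun u : ℝ => -((1 + u) ^ k)⁻¹) (k / (1 + u) ^ (k + 1)) u := by
  have h := ((hasDerivAt_zpow (-(k : ℤ)) (1 + u) (Or.inl hu)).comp u
    ((hasDerivAt_id u).const_add 1)).neg
  simp only [Function.comp_def, zpow_neg, zpow_natCast] at h
  refine h.congr_deriv ?_
  rw [show -(k : ℤ) - 1 = -((k + 1 : ℕ) : ℤ) by push_cast; ring, zpow_neg, zpow_natCast]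
  push_cast
  ring

theorem integral_natCast_div_one_add_pow_succ (k : ℕ) {T : ℝ} (hT : 0 ≤ T) :
    ∫ u in (0 : ℝ)..T, (k : ℝ) / (1 + u) ^ (k + 1) = 1 - ((1 + T) ^ k)⁻¹ := by
  have hpos : ∀ u ∈ Set.uIcc 0 T, 0 < 1 + u := fun u hu => by
    rw [Set.uIcc_of_le hT] at hu; linarith [hu.1]
  rw [integral_eq_sub_of_hasDerivAt
    (fun u hu => hasDerivAt_neg_inv_one_add_pow k (hpos u hu).ne')
    (ContinuousOn.intervalIntegrable (continuousOn_const.div (by fun_prop)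
      fun u hu => (pow_pos (hpos u hu) _).ne'))]
  norm_num
  ring

theorem one_sub_mul_one_add_le_one_sub_mul_pow (n : ℕ) {c u : ℝ} (hc : 0 ≤ c)
    (hcu : c * u ≤ 2) : 1 - n * c * (1 + u) ≤ (1 - c * u) ^ n := by
  have := one_add_mul_le_pow (a := -(c * u)) (by linarith) n
  rw [← sub_eq_add_neg] at this
  nlinarith [mul_nonneg (Nat.cast_nonneg (α := ℝ) n) hc]

theorem inv_one_add_inv_pow_succ_le {c : ℝ} (hc : 0 < c) (n : ℕ) :
    ((1 + 1 / c) ^ (n + 1))⁻¹ ≤ c := by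
  have h : (1 + 1 / c)⁻¹ = c / (c + 1) := by field_simp
  have h1 : c / (c + 1) ≤ 1 := (div_le_one (by linarith)).2 (by linarith)
  calc ((1 + 1 / c) ^ (n + 1))⁻¹ = (c / (c + 1)) ^ (n + 1) := by rw [← inv_pow, h]
    _ ≤ c / (c + 1) := pow_le_of_le_one (by positivity) h1 (by omega)
    _ ≤ c := div_le_self hc.le (by linarith)

theorem intervalIntegrable_div_one_add_pow {g : ℝ → ℝ} (hg : Continuous g) (k : ℕ) {T : ℝ}
    (hT : 0 ≤ T) : IntervalIntegrable (fun u => g u / (1 + u) ^ k) volume 0 T := by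
  refine ContinuousOn.intervalIntegrable (hg.continuousOn.div (by fun_prop) fun u hu => ?_)
  rw [Set.uIcc_of_le hT] at hu
  exact (pow_pos (by linarith [hu.1]) _).ne'

theorem le_mul_integral_one_sub_mul_pow_div (n : ℕ) {c : ℝ} (hc : 0 < c) :
    1 - ((1 + 1 / c) ^ (n + 1))⁻¹ - (n + 1) * c * (1 - ((1 + 1 / c) ^ n)⁻¹) ≤
      (n + 1) * ∫ u in (0 : ℝ)..1 / c, (1 - c * u) ^ n / (1 + u) ^ (n + 2) := by
  have hT : 0 ≤ 1 / c := by positivity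
  have hint (k : ℕ) :=
    intervalIntegrable_div_one_add_pow (continuous_const (y := (k : ℝ))) (k + 1) hT
  have hint_succ := hint (n + 1)
  push_cast [show n + 1 + 1 = n + 2 from rfl] at hint_succ
  have hsucc := integral_natCast_div_one_add_pow_succ (n + 1) hT
  push_cast [show n + 1 + 1 = n + 2 from rfl] at hsucc
  rw [← hsucc, ← integral_natCast_div_one_add_pow_succ n hT,
    ← intervalIntegral.integral_const_mul, ← intervalIntegral.integral_const_mul,
    ← integral_sub hint_succ ((hint n).const_mul _)]
  refine integral_mono_on hT (hint_succ.sub ((hint n).const_mul _))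
    ((intervalIntegrable_div_one_add_pow (by fun_prop) _ hT).const_mul _) fun u ⟨hu0, huT⟩ => ?_
  have hcu : c * u ≤ 1 := by rwa [le_div_iff₀' hc] at huT
  have hpos : 0 < 1 + u := by linarith
  have hbern := one_sub_mul_one_add_le_one_sub_mul_pow n hc.le (hcu.trans one_le_two)
  calc ((n : ℝ) + 1) / (1 + u) ^ (n + 2) - (n + 1) * c * (n / (1 + u) ^ (n + 1))
      = (n + 1) * ((1 - n * c * (1 + u)) / (1 + u) ^ (n + 2)) := by field_simp; ring
    _ ≤ (n + 1) * ((1 - c * u) ^ n / (1 + u) ^ (n + 2)) := by gcongr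

theorem stmt3_general (n : ℕ) :
    ∃ M : ℝ, 0 < M ∧ ∀ c : ℝ, 0 < c →
      1 - ((n:ℝ)+1) * (∫ u in (0:ℝ)..(1/c), (1-c*u)^n/(1+u)^(n+2)) ≤ M * c := by
  refine ⟨n + 2, by positivity, fun c hc => ?_⟩
  have hlower := le_mul_integral_one_sub_mul_pow_div n hc
  have hfirst := inv_one_add_inv_pow_succ_le hc n
  have hsecond : 0 ≤ (n + 1) * c * ((1 + 1 / c) ^ n)⁻¹ := by positivity
  linarith

theorem stmt3 (n : ℕ) (hn : 0 < n) :
    ∃ M : ℝ, 0 < M ∧ ∀ c : ℝ, 0 < c →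
      1 - ((n:ℝ)+1) * (∫ u in (0:ℝ)..(1/c), (1-c*u)^n/(1+u)^(n+2)) ≤ M * c :=
  stmt3_general n
end

section
/- Let n be a positive integer, λ > 0, and ε > 0. If x ∈ (X,Δ) is an n-dimensional klt singularity with local volume at least ε, and D is an effective ℚ-Cartier divisor such that the pair (X, Δ+(1+λ)D) is log canonical, then the local volume of x ∈ (X, Δ+D) is at least (λ/(1+λ))^n · ε. -/
/-- Abstract formalization of Lemma 2.9: valuations centered at `x` with finite log
discrepancy are modeled by a nonempty type `Val`, with `A v` = A_{X,Δ}(v),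
`d v` = v(D), `vol v` = vol(v).  The local volume is the infimum of the normalized
volume A^n·vol over all valuations; log canonicity of (X,Δ+(1+λ)D) says
A_{X,Δ}(v) ≥ (1+λ)·v(D), and A_{X,Δ+D}(v) = A_{X,Δ}(v) - v(D). -/
theorem stmt15 (n : ℕ) (hn : 0 < n) (lam ε : ℝ) (hlam : 0 < lam) (hε : 0 < ε)
    (Val : Type*) [Nonempty Val]
    (A d vol : Val → ℝ)
    (hA : ∀ v, 0 ≤ A v) (hd : ∀ v, 0 ≤ d v) (hvol : ∀ v, 0 ≤ vol v)
    (hlc : ∀ v, (1+lam) * d v ≤ A v)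
    (hvolX : ε ≤ ⨅ v, (A v)^n * vol v) :
    (lam/(1+lam))^n * ε ≤ ⨅ v, (A v - d v)^n * vol v := by
  have h1l : (0:ℝ) < 1 + lam := by linarith
  apply le_ciInf
  intro v
  have hεv : ε ≤ (A v)^n * vol v :=
    hvolX.trans (ciInf_le ⟨0, fun y ⟨w, hw⟩ => hw ▸
      mul_nonneg (pow_nonneg (hA w) n) (hvol w)⟩ v)
  have hkey : lam/(1+lam) * A v ≤ A v - d v := by
    have := hlc v
    have hd' : d v ≤ A v / (1+lam) := by
      rw [le_div_iff₀ h1l]; linarith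
    have : A v - d v ≥ A v - A v / (1+lam) := by linarith
    calc lam/(1+lam) * A v = A v - A v / (1+lam) := by field_simp; ring
      _ ≤ A v - d v := by linarith
  have hpos : (0:ℝ) ≤ lam/(1+lam) * A v :=
    mul_nonneg (div_nonneg hlam.le h1l.le) (hA v)
  calc (lam/(1+lam))^n * ε ≤ (lam/(1+lam))^n * ((A v)^n * vol v) := by
        apply mul_le_mul_of_nonneg_left hεv
        exact pow_nonneg (div_nonneg hlam.le h1l.le) n
    _ = (lam/(1+lam) * A v)^n * vol v := by rw [mul_pow]; ring
    _ ≤ (A v - d v)^n * vol v := by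
        apply mul_le_mul_of_nonneg_right _ (hvol v)
        exact pow_le_pow_left₀ hpos hkey n
end
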